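/- Unit eigenvalue lemma: Assume ω_k > 0 and S_k ≠ 0 for every k = 1,…,m_ue, and assume Y_bottom is rank-deficient, i.e. rank(Y_bottom) < m_ue. Then H^* e_1 ≠ 0 and G·diag(v)·(H^* e_1) = H^* e_1; in particular, the matrix G·diag(v) has an eigenvalue equal to 1. -/

import Mathlib

open Matrix Finset

noncomputable def Gmat {mtx mue : ℕ} (H P : Matrix (Fin mtx) (Fin mue) ℂ) :
    Matrix (Fin mue) (Fin mue) ℂ := Hᴴ * P

noncomputable def Sval {mtx mue : ℕ} (H P : Matrix (Fin mtx) (Fin mue) ℂ) (k : Fin mue) : ℝ :=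
  ‖Gmat H P k k‖ ^ 2

noncomputable def Ival {mtx mue : ℕ} (H P : Matrix (Fin mtx) (Fin mue) ℂ) (k : Fin mue) : ℝ :=
  ∑ j ∈ Finset.univ.erase k, ‖Gmat H P k j‖ ^ 2

noncomputable def Wval {mtx mue : ℕ} (H P : Matrix (Fin mtx) (Fin mue) ℂ)
    (ω : Fin mue → ℝ) (k : Fin mue) : ℝ := Ival H P k + ω k ^ 2

noncomputable def Lval {mtx mue : ℕ} (H P : Matrix (Fin mtx) (Fin mue) ℂ) (k : Fin mue) : ℝ :=
  ∑ j ∈ Finset.univ.erase k, ‖Gmat H P j k‖ ^ 2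

noncomputable def SINR {mtx mue : ℕ} (H P : Matrix (Fin mtx) (Fin mue) ℂ)
    (ω : Fin mue → ℝ) (k : Fin mue) : ℝ := Sval H P k / Wval H P ω k

def PowerOK {mtx mue : ℕ} (β : Fin mtx → ℝ) (P : Matrix (Fin mtx) (Fin mue) ℂ) : Prop :=
  ∀ i, ∑ j, ‖P i j‖ ^ 2 ≤ β i

def ParetoOptimal {mtx mue : ℕ} (H : Matrix (Fin mtx) (Fin mue) ℂ) (ω : Fin mue → ℝ)
    (β : Fin mtx → ℝ) (P : Matrix (Fin mtx) (Fin mue) ℂ) : Prop :=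
  PowerOK β P ∧ ¬ ∃ Q : Matrix (Fin mtx) (Fin mue) ℂ, PowerOK β Q ∧
    (∀ k, SINR H P ω k ≤ SINR H Q ω k) ∧ (∃ k, SINR H P ω k < SINR H Q ω k)

/-- The matrix `F` with `F_{kk} = 1` and `F_{kj} = -S_k/W_k` for `j ≠ k`. -/
noncomputable def Fmat {mtx mue : ℕ} (H P : Matrix (Fin mtx) (Fin mue) ℂ) (ω : Fin mue → ℝ) :
    Matrix (Fin mue) (Fin mue) ℂ :=
  Matrix.of fun k j => if k = j then 1 else ((-(Sval H P k / Wval H P ω k) : ℝ) : ℂ)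

/-- `D := 4 · diag(1/W_1,…,1/W_{m_ue}) · (G ∘ F)`. -/
noncomputable def Dmat {mtx mue : ℕ} (H P : Matrix (Fin mtx) (Fin mue) ℂ) (ω : Fin mue → ℝ) :
    Matrix (Fin mue) (Fin mue) ℂ :=
  (4 : ℂ) • (Matrix.diagonal fun k => (((Wval H P ω k)⁻¹ : ℝ) : ℂ)) *
    Matrix.hadamard (Gmat H P) (Fmat H P ω)

/-- `Y_bottom := [Dᵀ | Pᵀe_2 | ⋯ | Pᵀe_{m_tx}]`: its first `m_ue` columns are the columns
of `Dᵀ` and the remaining `m_tx - 1` columns are the transposed rows `2,…,m_tx` of `P`. -/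
noncomputable def Ybottom {mtx mue : ℕ} [NeZero mtx]
    (H P : Matrix (Fin mtx) (Fin mue) ℂ) (ω : Fin mue → ℝ) :
    Matrix (Fin mue) (Fin mue ⊕ {i : Fin mtx // i ≠ 0}) ℂ :=
  Matrix.of fun k c => Sum.elim (fun j => Dmat H P ω j k) (fun i => P i.1 k) c

/-- The direction vector `v` with `v_k = 1/((1 + W_k/S_k)·g_{kk})`. -/
noncomputable def vvec {mtx mue : ℕ} (H P : Matrix (Fin mtx) (Fin mue) ℂ) (ω : Fin mue → ℝ) :
    Fin mue → ℂ := fun k =>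
  (((1 + Wval H P ω k / Sval H P k : ℝ) : ℂ) * Gmat H P k k)⁻¹


lemma exists_ker_vec {m n : Type*} [Fintype m] [Fintype n] [DecidableEq m] [DecidableEq n]
    (A : Matrix m n ℂ) (h : A.rank < Fintype.card m) :
    ∃ u : m → ℂ, u ≠ 0 ∧ Aᵀ *ᵥ u = 0 := by
  have h2 : (Aᵀ).rank < Fintype.card m := by rwa [Matrix.rank_transpose]
  have hker : LinearMap.ker (Aᵀ).mulVecLin ≠ ⊥ := by
    intro hb
    have hinj : Function.Injective (Aᵀ).mulVecLin := LinearMap.ker_eq_bot.mp hb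
    have : (Aᵀ).rank = Fintype.card m := by
      rw [Matrix.rank, LinearMap.finrank_range_of_inj hinj]
      simp [Module.finrank_fintype_fun_eq_card]
    omega
  obtain ⟨u, hu, hu0⟩ := Submodule.exists_mem_ne_zero_of_ne_bot hker
  exact ⟨u, hu0, hu⟩

/-- **Unit eigenvalue lemma:** if all signals are nonzero and `Y_bottom` is rank-deficient,
then `H^* e_1` is a nonzero fixed vector of `G·diag(v)`; in particular `G·diag(v)` has an
eigenvalue equal to `1`. -/
theorem unit_eigenvalue_of_rank_deficiency {mtx mue : ℕ} [NeZero mtx] (hmtx : 2 ≤ mtx)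
    (H P : Matrix (Fin mtx) (Fin mue) ℂ) (ω : Fin mue → ℝ)
    (hω : ∀ k, 0 < ω k) (hS : ∀ k, Sval H P k ≠ 0)
    (hrank : (Ybottom H P ω).rank < mue) :
    (fun k => (starRingEnd ℂ) (H 0 k)) ≠ 0 ∧
    (Gmat H P * Matrix.diagonal (vvec H P ω)).mulVec (fun k => (starRingEnd ℂ) (H 0 k)) =
      (fun k => (starRingEnd ℂ) (H 0 k)) ∧
    Module.End.HasEigenvalue
      (Matrix.toLin' (Gmat H P * Matrix.diagonal (vvec H P ω))) (1 : ℂ) := by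
  -- basic positivity facts
  have hSpos : ∀ k, 0 < Sval H P k := by
    intro k
    have := sq_nonneg ‖Gmat H P k k‖
    rcases lt_or_eq_of_le this with h | h
    · exact h
    · exact absurd h.symm (hS k)
  have hWpos : ∀ k, 0 < Wval H P ω k := by
    intro k
    have hI : 0 ≤ Ival H P k := Finset.sum_nonneg fun j _ => sq_nonneg _
    have := pow_pos (hω k) 2
    unfold Wval; linarith
  have hgkk : ∀ k, Gmat H P k k ≠ 0 := by
    intro k hg
    apply hS k
    simp [Sval, hg]
  -- obtain kernel vector u of rows of Ybottom
  have hrank' : (Ybottom H P ω).rank < Fintype.card (Fin mue) := by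
    simpa using hrank
  obtain ⟨u, hu0, hker⟩ := exists_ker_vec _ hrank'
  have hcol : ∀ c, ∑ k, Ybottom H P ω k c * u k = 0 := by
    intro c
    have := congrFun hker c
    simpa [Matrix.mulVec, dotProduct, Matrix.transpose_apply] using this
  -- row conditions
  have hD : ∀ j, ∑ k, Dmat H P ω j k * u k = 0 := fun j => by
    simpa [Ybottom] using hcol (Sum.inl j)
  have hP : ∀ i : Fin mtx, i ≠ 0 → ∑ k, P i k * u k = 0 := fun i hi => by
    simpa [Ybottom] using hcol (Sum.inr ⟨i, hi⟩)
  set c : ℂ := ∑ k, P 0 k * u k with hc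
  set x : Fin mue → ℂ := fun k => (starRingEnd ℂ) (H 0 k) with hx
  -- P *ᵥ u is supported at 0
  have hPu : ∀ i : Fin mtx, (P *ᵥ u) i = if i = 0 then c else 0 := by
    intro i
    by_cases hi : i = 0
    · simp [hi, Matrix.mulVec, dotProduct, hc]
    · simp [hi, Matrix.mulVec, dotProduct, hP i hi]
  -- G *ᵥ u = c • x
  have hGu : ∀ k, ∑ j, Gmat H P k j * u j = c * x k := by
    intro k
    have h1 : (Gmat H P *ᵥ u) k = (Hᴴ *ᵥ (P *ᵥ u)) k := by
      rw [Gmat, Matrix.mulVec_mulVec]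
    have h2 : (Hᴴ *ᵥ (P *ᵥ u)) k = (starRingEnd ℂ) (H 0 k) * c := by
      have hrw : (Hᴴ *ᵥ (P *ᵥ u)) k = ∑ i, (Hᴴ k i) * (P *ᵥ u) i := rfl
      rw [hrw, Finset.sum_eq_single 0]
      · rw [hPu 0]; simp [Matrix.conjTranspose_apply]
      · intro b _ hb; rw [hPu b]; simp [hb]
      · simp
    have := h1.trans h2
    simpa [Matrix.mulVec, dotProduct, hx, mul_comm] using this
  -- solve for u k
  have hu : ∀ k, u k = c * (vvec H P ω k * x k) := by
    intro k
    have hDk := hD k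
    have hDentry : ∀ j, Dmat H P ω k j =
        4 * ((Wval H P ω k : ℝ) : ℂ)⁻¹ * (Gmat H P k j * Fmat H P ω k j) := by
      intro j
      simp [Dmat, Matrix.smul_mul, Matrix.diagonal_mul, Matrix.hadamard_apply, mul_assoc]
    have hW0 : ((Wval H P ω k : ℝ) : ℂ) ≠ 0 := by
      exact_mod_cast (hWpos k).ne'
    have h4 : (4 : ℂ) * ((Wval H P ω k : ℝ) : ℂ)⁻¹ ≠ 0 := by
      exact mul_ne_zero (by norm_num) (inv_ne_zero hW0)
    have h' : (4 : ℂ) * ((Wval H P ω k : ℝ) : ℂ)⁻¹ *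
        ∑ j, Gmat H P k j * Fmat H P ω k j * u j = 0 := by
      rw [Finset.mul_sum, ← hDk]
      exact Finset.sum_congr rfl fun j _ => by rw [hDentry j]; ring
    have hsum : ∑ j, Gmat H P k j * Fmat H P ω k j * u j = 0 := by
      rcases mul_eq_zero.mp h' with h | h
      · exact absurd h h4
      · exact h
    -- split the sum at j = k
    have hsplit : Gmat H P k k * u k +
        ∑ j ∈ Finset.univ.erase k, Gmat H P k j *
          ((-(Sval H P k / Wval H P ω k) : ℝ) : ℂ) * u j = 0 := by
      rw [← hsum, ← Finset.add_sum_erase _ _ (Finset.mem_univ k)]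
      congr 1
      · simp [Fmat]
      · refine Finset.sum_congr rfl fun j hj => ?_
        have hkj : ¬ k = j := fun h => (Finset.mem_erase.mp hj).1 h.symm
        simp [Fmat, hkj]
    have herase : ∑ j ∈ Finset.univ.erase k, Gmat H P k j * u j
        = c * x k - Gmat H P k k * u k := by
      have h5 := Finset.add_sum_erase Finset.univ (fun j => Gmat H P k j * u j)
        (Finset.mem_univ k)
      rw [← hGu k]
      linear_combination h5
    have hkey : Gmat H P k k * u k -
        ((Sval H P k / Wval H P ω k : ℝ) : ℂ) * (c * x k - Gmat H P k k * u k) = 0 := by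
      have h6 : ∑ j ∈ Finset.univ.erase k, Gmat H P k j *
          ((-(Sval H P k / Wval H P ω k) : ℝ) : ℂ) * u j
          = -(((Sval H P k / Wval H P ω k : ℝ) : ℂ)) *
            ∑ j ∈ Finset.univ.erase k, Gmat H P k j * u j := by
        rw [Finset.mul_sum]
        refine Finset.sum_congr rfl fun j _ => ?_
        push_cast
        ring
      rw [h6, herase] at hsplit
      push_cast at hsplit ⊢
      linear_combination hsplit
    -- now algebra
    have hS0 : ((Sval H P k : ℝ) : ℂ) ≠ 0 := by exact_mod_cast hS k
    have hg0 := hgkk k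
    have hvden : ((1 + Wval H P ω k / Sval H P k : ℝ) : ℂ) * Gmat H P k k ≠ 0 := by
      apply mul_ne_zero _ hg0
      have : (0:ℝ) < 1 + Wval H P ω k / Sval H P k := by
        have := div_pos (hWpos k) (hSpos k); linarith
      exact_mod_cast this.ne'
    rw [vvec]
    rw [eq_comm, mul_comm c, mul_assoc]
    rw [inv_mul_eq_iff_eq_mul₀ hvden]
    push_cast at hkey ⊢
    field_simp at hkey ⊢
    ring_nf at hkey ⊢
    linear_combination -hkey
  -- c ≠ 0
  have hc0 : c ≠ 0 := by
    intro h
    apply hu0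
    funext k
    simp [hu k, h]
  -- x ≠ 0
  have hx0 : x ≠ 0 := by
    intro h
    apply hu0
    funext k
    have : x k = 0 := congrFun h k
    simp [hu k, this]
  -- fixed point
  have hfix : (Gmat H P * Matrix.diagonal (vvec H P ω)) *ᵥ x = x := by
    funext k
    have : ((Gmat H P * Matrix.diagonal (vvec H P ω)) *ᵥ x) k
        = ∑ j, Gmat H P k j * (vvec H P ω j * x j) := by
      simp [Matrix.mulVec, dotProduct, Matrix.mul_diagonal, mul_assoc]
    rw [this]
    have : ∑ j, Gmat H P k j * (vvec H P ω j * x j)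
        = c⁻¹ * ∑ j, Gmat H P k j * u j := by
      rw [Finset.mul_sum]
      apply Finset.sum_congr rfl
      intro j _
      rw [hu j]
      field_simp
    rw [this, hGu k]
    field_simp
  refine ⟨hx0, hfix, ?_⟩
  apply Module.End.hasEigenvalue_of_hasEigenvector (x := x)
  constructor
  · rw [Module.End.mem_eigenspace_iff]
    simpa [Matrix.toLin'_apply] using hfix
  · exact hx0
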